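/- arXiv:1201.0192 — 7 statements merged into one kernel-verified Lean document; each statement's English description precedes it below -/
import Mathlib

section
/- Let a, b be real numbers with a < 0, b > 1, and suppose ln(-a)/ln(b) is a negative irrational number. Then the multiplicative semigroup {a^m * b^n : m, n ∈ ℕ} is dense in ℝ. -/
/-!
Put `L = log b > 0` and `l = log (-a) < 0`. The even powers `a ^ (2n) * b ^ m = exp (m L + n (2l))`
are the exponentials of the additive monoid generated by `L` and `2l`. As `l / L` is irrational,
Dirichlet's approximation theorem gives nonzero elements `jL + k(2l)` of arbitrarily small absolute
value; starting from a large multiple of `L` or of `2l` and adding multiples of such a small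
element one lands in any interval, so the monoid is dense in `ℝ`. Hence the even powers are dense
in `(0, ∞)`, and multiplying them by `a`, the odd powers are dense in `(-∞, 0)`.
-/

open Real Set

theorem exists_add_nsmul_mem_Ioc {G : Type*} [AddCommGroup G] [LinearOrder G]
    [IsOrderedAddMonoid G] [Archimedean G] {a b c : G} (ha : 0 < a) (hbc : b ≤ c) :
    ∃ n : ℕ, b + n • a ∈ Ioc c (c + a) := by
  obtain ⟨m, hm, -⟩ := existsUnique_add_zsmul_mem_Ioc ha b c
  have hm₀ : 0 ≤ m := by
    have : (0 : ℤ) • a < m • a := by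
      rw [zero_zsmul]; exact (lt_add_iff_pos_right b).1 (hbc.trans_lt hm.1)
    exact ((zsmul_lt_zsmul_iff_left ha).1 this).le
  lift m to ℕ using hm₀
  exact ⟨m, by simpa only [natCast_zsmul] using hm⟩

theorem AddSubmonoid.dense_of_not_isolated_zero {𝕜 : Type*} [Field 𝕜] [LinearOrder 𝕜]
    [IsStrictOrderedRing 𝕜] [TopologicalSpace 𝕜] [OrderTopology 𝕜] [Archimedean 𝕜]
    (S : AddSubmonoid 𝕜)
    (hpos : ∃ x ∈ S, 0 < x) (hneg : ∃ y ∈ S, y < 0)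
    (hS : ∀ ε > 0, ∃ t ∈ S, t ≠ 0 ∧ |t| < ε) : Dense (S : Set 𝕜) := by
  refine dense_of_exists_between fun p q hpq => ?_
  obtain ⟨t, htS, ht₀, ht⟩ := hS (q - p) (sub_pos.2 hpq)
  rcases ht₀.lt_or_gt with htneg | htpos
  · obtain ⟨x, hxS, hx⟩ := hpos
    obtain ⟨n, hn⟩ := Archimedean.arch q hx
    obtain ⟨k, hk⟩ := exists_add_nsmul_mem_Ioc (neg_pos.2 htneg) (_root_.neg_le_neg hn)
    refine ⟨n • x + k • t, add_mem (nsmul_mem hxS n) (nsmul_mem htS k), ?_, ?_⟩ <;>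
      simp only [mem_Ioc, smul_neg, nsmul_eq_mul, abs_of_neg htneg] at hk ht ⊢ <;> linarith
  · obtain ⟨y, hyS, hy⟩ := hneg
    obtain ⟨n, hn⟩ := Archimedean.arch (-p) (neg_pos.2 hy)
    have hny : n • y ≤ p := by simpa using _root_.neg_le_neg hn
    obtain ⟨k, hk⟩ := exists_add_nsmul_mem_Ioc htpos hny
    refine ⟨n • y + k • t, add_mem (nsmul_mem hyS n) (nsmul_mem htS k), ?_, ?_⟩ <;>
      simp only [mem_Ioc, nsmul_eq_mul, abs_of_pos htpos] at hk ht ⊢ <;> linarith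

theorem exists_mem_addSubmonoidClosure_pair_ne_zero_abs_lt {L l : ℝ} (hL : 0 < L) (hl : l < 0)
    (hirr : Irrational (l / L)) {ε : ℝ} (hε : 0 < ε) :
    ∃ t ∈ AddSubmonoid.closure {L, l}, t ≠ 0 ∧ |t| < ε := by
  set ξ := -(l / L)
  have hξ : 0 < ξ := neg_pos.2 (div_neg_of_neg_of_pos hl hL)
  obtain ⟨N, hN⟩ := exists_nat_gt (L / ε)
  have hN₀ : 0 < N := by exact_mod_cast (div_pos hL hε).trans hN
  obtain ⟨k, hk₀, -, hk⟩ := exists_nat_abs_mul_sub_round_le ξ hN₀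
  have hj₀ : 0 ≤ round (k * ξ) := by
    rw [round_eq]; exact Int.floor_nonneg.2 (by positivity)
  lift round (k * ξ) to ℕ using hj₀ with j hj
  have ht : j • L + k • l = L * (j - k * ξ) := by
    simp only [nsmul_eq_mul, ξ]; field_simp; ring
  refine ⟨j • L + k • l, (AddSubmonoid.mem_closure_pair _ _ _).2 ⟨j, k, rfl⟩, ?_, ?_⟩
  · rw [ht]
    exact mul_ne_zero hL.ne' (sub_ne_zero.2 ((hirr.neg.natCast_mul hk₀.ne').ne_nat j).symm)
  · calc |j • L + k • l| = L * |k * ξ - j| := by rw [ht, abs_mul, abs_of_pos hL, abs_sub_comm]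
      _ ≤ L * (1 / (N + 1)) := by gcongr; exact_mod_cast hk
      _ < ε := by
        rw [div_lt_iff₀ hε] at hN
        rw [mul_one_div, div_lt_iff₀ (by positivity)]
        nlinarith

theorem dense_addSubmonoidClosure_pair {L l : ℝ} (hL : 0 < L) (hl : l < 0)
    (hirr : Irrational (l / L)) : Dense (AddSubmonoid.closure {L, l} : Set ℝ) :=
  AddSubmonoid.dense_of_not_isolated_zero _
    ⟨L, AddSubmonoid.subset_closure (mem_insert L _), hL⟩
    ⟨l, AddSubmonoid.subset_closure (mem_insert_of_mem L rfl), hl⟩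
    fun _ hε => exists_mem_addSubmonoidClosure_pair_ne_zero_abs_lt hL hl hirr hε

theorem Real.exp_nsmul_log_add_nsmul_two_mul_log_neg {a b : ℝ} (ha : a < 0) (hb : 0 < b)
    (m n : ℕ) : exp (m • log b + n • (2 * log (-a))) = a ^ (2 * n) * b ^ m := by
  rw [exp_add, exp_nsmul, exp_nsmul, exp_log hb, two_mul, exp_add, exp_log (neg_pos.2 ha)]
  ring

theorem dense_semigroup_of_two_reals (a b : ℝ) (ha : a < 0) (hb : 1 < b)
    (hneg : Real.log (-a) / Real.log b < 0)
    (hirr : Irrational (Real.log (-a) / Real.log b)) :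
    Dense {x : ℝ | ∃ m n : ℕ, x = a ^ m * b ^ n} := by
  set T := {x : ℝ | ∃ m n : ℕ, x = a ^ m * b ^ n}
  have hL : 0 < log b := log_pos hb
  have hl : 2 * log (-a) < 0 := by linarith [neg_of_div_neg_left hneg hL.le]
  have hM := dense_addSubmonoidClosure_pair hL hl
    (by simpa only [Nat.cast_ofNat, mul_div_assoc] using hirr.natCast_mul (m := 2) two_ne_zero)
  have hMT : ∀ u ∈ AddSubmonoid.closure {log b, 2 * log (-a)}, exp u ∈ T ∧ a * exp u ∈ T := by
    rintro _ hu
    obtain ⟨m, n, rfl⟩ := (AddSubmonoid.mem_closure_pair _ _ _).1 hu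
    rw [Real.exp_nsmul_log_add_nsmul_two_mul_log_neg ha (by linarith)]
    exact ⟨⟨2 * n, m, rfl⟩, ⟨2 * n + 1, m, by ring⟩⟩
  have hIoi : range exp ⊆ closure T :=
    (continuous_exp.range_subset_closure_image_dense hM).trans
      (closure_mono (image_subset_iff.2 fun u hu => (hMT u hu).1))
  have hIio : range (fun u => a * exp u) ⊆ closure T :=
    ((continuous_const.mul continuous_exp).range_subset_closure_image_dense hM).trans
      (closure_mono (image_subset_iff.2 fun u hu => (hMT u hu).2))
  refine ((dense_compl_singleton (0 : ℝ)).mono fun x hx => ?_).of_closure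
  rcases lt_or_gt_of_ne hx with hx | hx
  · refine hIio ⟨log (x / a), ?_⟩
    change a * exp (log (x / a)) = x
    rw [exp_log (div_pos_of_neg_of_neg hx ha), mul_div_cancel₀ x ha.ne]
  · exact hIoi ⟨log x, exp_log hx⟩
end

section
/- Let 𝕂 be ℝ or ℂ, n > 1, and let P₀, Q₀, P, Q be nonzero column vectors in 𝕂ⁿ with Q₀ᵀP₀ = QᵀP ≠ 0. Then there exists an invertible n×n matrix M over 𝕂 such that M⁻¹P₀ = P and MᵀQ₀ = Q. -/
/-!
The pairs `(v, f)` of a vector and a linear form with `f v = c ≠ 0` form a single orbit under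
`GL(V)`: the map `x ↦ (x - (f x / c) • v, f x)` identifies `V` with `ker f × K`, sending `v` to
`(0, c)` and `f` to the second projection, and the kernels of two nonzero forms are isomorphic,
so an isomorphism `ker f ≃ ker f₀` transports `(v, f)` to `(v₀, f₀)`. The matrix `M` is this
isomorphism for `f = q ⬝ᵥ ·` and `f₀ = q₀ ⬝ᵥ ·`, where `P = replicateCol p` etc.
-/

namespace Module.Dual

variable {K V : Type*} [Field K] [AddCommGroup V] [Module K V]

def kerProdEquiv (f : Dual K V) {v : V} (hv : f v ≠ 0) : V ≃ₗ[K] LinearMap.ker f × K where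
  toFun x := (⟨x - (f x / f v) • v, by simp [hv]⟩, f x)
  invFun y := y.1 + (y.2 / f v) • v
  map_add' x y := by ext <;> simp [add_div, add_smul]; abel
  map_smul' a x := by ext <;> simp [mul_div_assoc, smul_sub, smul_smul]
  left_inv x := by simp
  right_inv y := by ext <;> simp [hv]

variable {f f₀ : Dual K V} {v v₀ : V}

@[simp]
theorem kerProdEquiv_apply_snd (hv : f v ≠ 0) (x : V) : (kerProdEquiv f hv x).2 = f x := rfl

@[simp]
theorem kerProdEquiv_symm_apply (hv : f v ≠ 0) (y : LinearMap.ker f × K) :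
    (kerProdEquiv f hv).symm y = y.1 + (y.2 / f v) • v := rfl

theorem kerProdEquiv_self (hv : f v ≠ 0) : kerProdEquiv f hv v = (0, f v) := by
  ext <;> simp [kerProdEquiv, hv]

theorem nonempty_linearEquiv_ker (hv : f v ≠ 0) (hv₀ : f₀ v₀ ≠ 0) :
    Nonempty (LinearMap.ker f ≃ₗ[K] LinearMap.ker f₀) := by
  have h := ((kerProdEquiv f hv).symm ≪≫ₗ kerProdEquiv f₀ hv₀).rank_eq
  simp only [rank_prod, rank_self, Cardinal.lift_one, Cardinal.add_one_inj, Cardinal.lift_inj] at h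
  exact nonempty_linearEquiv_of_rank_eq h

theorem exists_linearEquiv_apply_eq_and_comp_eq (h : f₀ v₀ = f v) (hv : f v ≠ 0) :
    ∃ T : V ≃ₗ[K] V, T v = v₀ ∧ f₀ ∘ₗ T.toLinearMap = f := by
  have hv₀ : f₀ v₀ ≠ 0 := h ▸ hv
  obtain ⟨e⟩ := nonempty_linearEquiv_ker hv hv₀
  let T := kerProdEquiv f hv ≪≫ₗ e.prodCongr (LinearEquiv.refl K K) ≪≫ₗ
    (kerProdEquiv f₀ hv₀).symm
  refine ⟨T, ?_, LinearMap.ext fun x => ?_⟩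
  · simp [T, kerProdEquiv_self, ← h, hv₀]
  · simp [T, hv₀]

end Module.Dual

namespace Matrix

theorem exists_isUnit_mulVec_eq_and_vecMul_eq {K n : Type*} [Field K] [Fintype n] [DecidableEq n]
    {p₀ q₀ p q : n → K} (h : q₀ ⬝ᵥ p₀ = q ⬝ᵥ p) (hne : q ⬝ᵥ p ≠ 0) :
    ∃ M : Matrix n n K, IsUnit M ∧ M *ᵥ p = p₀ ∧ q₀ ᵥ* M = q := by
  obtain ⟨T, hTp, hTq⟩ := Module.Dual.exists_linearEquiv_apply_eq_and_comp_eq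
    (f := dotProductEquiv K n q) (f₀ := dotProductEquiv K n q₀)
    (by simpa using h) (by simpa using hne)
  refine ⟨LinearMap.toMatrix' T.toLinearMap,
    LinearMap.isUnit_toMatrix'_iff.mpr ((Module.End.isUnit_iff _).mpr T.bijective), ?_, ?_⟩
  · simpa using hTp
  · refine dotProduct_eq _ _ fun x => ?_
    simpa [← dotProduct_mulVec] using LinearMap.congr_fun hTq x

theorem replicateCol_surjective {m ι α : Type*} [Unique ι] :
    Function.Surjective (replicateCol ι : (m → α) → Matrix m ι α) :=
  fun A => ⟨fun i => A i default, by ext i j; rw [Unique.eq_default j]; rfl⟩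

end Matrix

open Matrix in
theorem exists_matrix_solving_system_general {𝕂 : Type*} [RCLike 𝕂] {n : ℕ}
    (P₀ Q₀ P Q : Matrix (Fin n) (Fin 1) 𝕂)
    (heq : Q₀ᵀ * P₀ = Qᵀ * P) (hne : Q₀ᵀ * P₀ ≠ 0) :
    ∃ M : Matrix (Fin n) (Fin n) 𝕂, IsUnit M ∧ M⁻¹ * P₀ = P ∧ Mᵀ * Q₀ = Q := by
  obtain ⟨p₀, rfl⟩ := replicateCol_surjective P₀
  obtain ⟨q₀, rfl⟩ := replicateCol_surjective Q₀
  obtain ⟨p, rfl⟩ := replicateCol_surjective P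
  obtain ⟨q, rfl⟩ := replicateCol_surjective Q
  simp only [transpose_replicateCol, replicateRow_mul_replicateCol] at heq hne
  have hdot : q₀ ⬝ᵥ p₀ = q ⬝ᵥ p := congrFun₂ heq 0 0
  have hdot_ne : q ⬝ᵥ p ≠ 0 := hdot ▸ fun h => hne (by ext; simp [h])
  obtain ⟨M, hM, hMp, hMq⟩ := exists_isUnit_mulVec_eq_and_vecMul_eq hdot hdot_ne
  refine ⟨M, hM, ?_, ?_⟩
  · rw [← hMp, replicateCol_mulVec,
      nonsing_inv_mul_cancel_left M _ ((isUnit_iff_isUnit_det M).mp hM)]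
  · rw [← replicateCol_mulVec, mulVec_transpose, hMq]

open Matrix in
theorem exists_matrix_solving_system {𝕂 : Type*} [RCLike 𝕂] {n : ℕ} (hn : 1 < n)
    (P₀ Q₀ P Q : Matrix (Fin n) (Fin 1) 𝕂)
    (hP₀ : P₀ ≠ 0) (hQ₀ : Q₀ ≠ 0) (hP : P ≠ 0) (hQ : Q ≠ 0)
    (heq : Q₀ᵀ * P₀ = Qᵀ * P) (hne : Q₀ᵀ * P₀ ≠ 0) :
    ∃ M : Matrix (Fin n) (Fin n) 𝕂, IsUnit M ∧ M⁻¹ * P₀ = P ∧ Mᵀ * Q₀ = Q :=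
  exists_matrix_solving_system_general P₀ Q₀ P Q heq hne
end

section
/- Let n > 1 and let P₀, Q₀, P, Q be nonzero column vectors in ℝⁿ with Q₀ᵀP₀ = QᵀP ≠ 0. Then there exists an invertible n×n real matrix M with positive determinant such that M⁻¹P₀ = P and MᵀQ₀ = Q. -/
/-!
For a linear form `f` and a vector `v` with `f v ≠ 0`, the map `(y, t) ↦ y + t • v` identifies
`ker f × K` with `V`. Hence any isomorphism `ker f ≃ ker f'`, extended by `v ↦ v'`, carries the
pair `(v, f)` to `(v', f')` whenever `f v = f' v'`. If `dim V ≥ 2`, then `ker f ≠ 0` carries a map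
of determinant `-1`, which extended by the identity on `K ∙ v` stabilises `(v, f)`; composing with
it fixes the sign of the determinant. The matrix statement is the case `V = ℝⁿ`, `f = Qᵀ`,
`f' = Q₀ᵀ`, with `M⁻¹ P₀ = P` read as `M P = P₀` and `Mᵀ Q₀ = Q` as `Q₀ᵀ M = Qᵀ`.
-/

open Module LinearMap

section Field

variable {K V : Type*} [Field K] [AddCommGroup V] [Module K V]

theorem Module.Dual.exists_linearEquiv_ker_prod {f : Dual K V} {v : V} (hv : f v ≠ 0) :
    ∃ d : (ker f × K) ≃ₗ[K] V, ∀ y t, d (y, t) = y + t • v := by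
  let d₀ : (ker f × K) →ₗ[K] V := (ker f).subtype.coprod (LinearMap.id.smulRight v)
  have hd₀ : ∀ y t, d₀ (y, t) = y + t • v := fun _ _ => rfl
  refine ⟨LinearEquiv.ofBijective d₀ ⟨?_, fun x => ?_⟩, hd₀⟩
  · rw [← LinearMap.ker_eq_bot, LinearMap.ker_eq_bot']
    rintro ⟨y, t⟩ h
    rw [hd₀] at h
    obtain rfl : t = 0 := by simpa [y.2, hv] using congrArg f h
    rw [zero_smul, add_zero] at h
    exact Prod.ext (Subtype.ext h) rfl
  · refine ⟨(⟨x - (f x / f v) • v, by simp [hv]⟩, f x / f v), ?_⟩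
    rw [hd₀]
    exact sub_add_cancel _ _

variable [FiniteDimensional K V]

theorem Module.Dual.finrank_ker_eq_of_apply_ne_zero {f f' : Dual K V} {v v' : V}
    (hv : f v ≠ 0) (hv' : f' v' ≠ 0) : finrank K (ker f) = finrank K (ker f') := by
  have := finrank_ker_add_one_of_ne_zero (f := f) (by rintro rfl; exact hv rfl)
  have := finrank_ker_add_one_of_ne_zero (f := f') (by rintro rfl; exact hv' rfl)
  omega

theorem Module.Dual.exists_linearEquiv_apply_eq_and_comp_eq_s3 {f f' : Dual K V} {v v' : V}
    (h : f v = f' v') (hv : f v ≠ 0) :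
    ∃ T : V ≃ₗ[K] V, T v = v' ∧ f' ∘ₗ T.toLinearMap = f := by
  have hv' : f' v' ≠ 0 := h ▸ hv
  obtain ⟨d, hd⟩ := f.exists_linearEquiv_ker_prod hv
  obtain ⟨d', hd'⟩ := f'.exists_linearEquiv_ker_prod hv'
  let φ := LinearEquiv.ofFinrankEq _ _ (finrank_ker_eq_of_apply_ne_zero hv hv')
  let T := d.symm ≪≫ₗ φ.prodCongr (LinearEquiv.refl K K) ≪≫ₗ d'
  have hT : ∀ y t, T (d (y, t)) = φ y + t • v' := by
    intro y t
    simp [T, hd']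
  refine ⟨T, by simpa [hd] using hT 0 1, LinearMap.ext fun x => ?_⟩
  obtain ⟨⟨y, t⟩, rfl⟩ := d.surjective x
  have hy : f y = 0 := y.2
  have hφy : f' (φ y) = 0 := (φ y).2
  rw [LinearMap.comp_apply, LinearEquiv.coe_coe, hT, hd]
  simp [hy, hφy, h]

theorem LinearMap.exists_det_eq_neg_one [Nontrivial V] : ∃ σ : End K V, LinearMap.det σ = -1 := by
  obtain ⟨u, hu⟩ := exists_ne (0 : V)
  obtain ⟨g, hg⟩ := Projective.exists_dual_eq_one K hu
  obtain ⟨d, -⟩ := g.exists_linearEquiv_ker_prod (hg ▸ one_ne_zero)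
  refine ⟨d.toLinearMap ∘ₗ prodMap id (-id) ∘ₗ d.symm.toLinearMap, ?_⟩
  rw [det_conj, det_prodMap, det_id, det_ring]
  simp

theorem Module.Dual.exists_det_eq_neg_one_of_apply_ne_zero (hV : 1 < finrank K V)
    {f : Dual K V} {v : V} (hv : f v ≠ 0) :
    ∃ R : End K V, R v = v ∧ f ∘ₗ R = f ∧ LinearMap.det R = -1 := by
  obtain ⟨d, hd⟩ := f.exists_linearEquiv_ker_prod hv
  have : Nontrivial (ker f) := by
    apply Module.nontrivial_of_finrank_pos (R := K)
    have := finrank_ker_add_one_of_ne_zero (f := f) (by rintro rfl; exact hv rfl)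
    omega
  obtain ⟨σ, hσ⟩ := LinearMap.exists_det_eq_neg_one (K := K) (V := ker f)
  let R := d.toLinearMap ∘ₗ prodMap σ id ∘ₗ d.symm.toLinearMap
  have hR : ∀ y t, R (d (y, t)) = σ y + t • v := by
    intro y t
    simp only [R, comp_apply, LinearEquiv.coe_coe, LinearEquiv.symm_apply_apply]
    exact hd (σ y) t
  refine ⟨R, by simpa [hd] using hR 0 1, LinearMap.ext fun x => ?_, ?_⟩
  · obtain ⟨⟨y, t⟩, rfl⟩ := d.surjective x
    have hy : f y = 0 := y.2
    have hσy : f (σ y) = 0 := (σ y).2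
    rw [LinearMap.comp_apply, hR, hd]
    simp [hy, hσy]
  · rw [det_conj, det_prodMap, det_id, hσ, mul_one]

end Field

theorem Module.Dual.exists_det_pos_apply_eq_and_comp_eq {K V : Type*} [Field K] [LinearOrder K]
    [IsStrictOrderedRing K] [AddCommGroup V] [Module K V] [FiniteDimensional K V]
    (hV : 1 < finrank K V) {f f' : Dual K V} {v v' : V} (h : f v = f' v') (hv : f v ≠ 0) :
    ∃ T : End K V, 0 < LinearMap.det T ∧ T v = v' ∧ f' ∘ₗ T = f := by
  obtain ⟨T, hTv, hTf⟩ := exists_linearEquiv_apply_eq_and_comp_eq_s3 h hv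
  obtain ⟨R, hRv, hRf, hR⟩ := exists_det_eq_neg_one_of_apply_ne_zero hV hv
  rcases (LinearEquiv.isUnit_det' T).ne_zero.lt_or_gt with hneg | hpos
  · refine ⟨T.toLinearMap ∘ₗ R, ?_, by simp [hRv, hTv], by rw [← LinearMap.comp_assoc, hTf, hRf]⟩
    rw [det_comp, hR]
    linarith
  · exact ⟨T, hpos, hTv, hTf⟩

namespace Matrix

theorem exists_replicateCol_eq {m ι α : Type*} [Unique ι] (X : Matrix m ι α) :
    ∃ v, replicateCol ι v = X :=
  ⟨fun i => X i default, by ext i j; rw [Unique.eq_default j]; rfl⟩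

theorem exists_det_pos_mulVec_eq_and_transpose_mulVec_eq {K ι : Type*} [Field K] [LinearOrder K]
    [IsStrictOrderedRing K] [Fintype ι] [DecidableEq ι] (hι : 1 < Fintype.card ι)
    {p p₀ q q₀ : ι → K} (h : q ⬝ᵥ p = q₀ ⬝ᵥ p₀) (hp : q ⬝ᵥ p ≠ 0) :
    ∃ M : Matrix ι ι K, 0 < M.det ∧ M *ᵥ p = p₀ ∧ Mᵀ *ᵥ q₀ = q := by
  obtain ⟨T, hdet, hTp, hTq⟩ := Module.Dual.exists_det_pos_apply_eq_and_comp_eq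
    (f := dotProductEquiv K ι q) (f' := dotProductEquiv K ι q₀) (by simpa using hι)
    (by simpa using h) (by simpa using hp)
  refine ⟨LinearMap.toMatrix' T, by rwa [LinearMap.det_toMatrix'],
    by rwa [LinearMap.toMatrix'_mulVec], (dotProductEquiv K ι).injective ?_⟩
  refine hTq ▸ LinearMap.ext fun x => ?_
  simp [mulVec_transpose, ← dotProduct_mulVec]

end Matrix

open Matrix in
theorem exists_posdet_matrix_solving_system_general {n : ℕ} (hn : 1 < n)
    (P₀ Q₀ P Q : Matrix (Fin n) (Fin 1) ℝ)
    (heq : Q₀ᵀ * P₀ = Qᵀ * P) (hne : Q₀ᵀ * P₀ ≠ 0) :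
    ∃ M : Matrix (Fin n) (Fin n) ℝ, 0 < M.det ∧ M⁻¹ * P₀ = P ∧ Mᵀ * Q₀ = Q := by
  obtain ⟨p₀, rfl⟩ := exists_replicateCol_eq P₀
  obtain ⟨q₀, rfl⟩ := exists_replicateCol_eq Q₀
  obtain ⟨p, rfl⟩ := exists_replicateCol_eq P
  obtain ⟨q, rfl⟩ := exists_replicateCol_eq Q
  simp only [transpose_replicateCol, replicateRow_mul_replicateCol] at heq hne
  have hc : q ⬝ᵥ p = q₀ ⬝ᵥ p₀ := (congrFun₂ heq 0 0).symm
  have hc0 : q ⬝ᵥ p ≠ 0 := hc ▸ fun h0 => hne (by ext; exact h0)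
  obtain ⟨M, hdet, hMp, hMq⟩ :=
    exists_det_pos_mulVec_eq_and_transpose_mulVec_eq (by simpa using hn) hc hc0
  refine ⟨M, hdet, ?_, by rw [← replicateCol_mulVec, hMq]⟩
  rw [← hMp, ← replicateCol_mulVec, mulVec_mulVec, nonsing_inv_mul _ hdet.ne'.isUnit, one_mulVec]

open Matrix in
theorem exists_posdet_matrix_solving_system {n : ℕ} (hn : 1 < n)
    (P₀ Q₀ P Q : Matrix (Fin n) (Fin 1) ℝ)
    (hP₀ : P₀ ≠ 0) (hQ₀ : Q₀ ≠ 0) (hP : P ≠ 0) (hQ : Q ≠ 0)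
    (heq : Q₀ᵀ * P₀ = Qᵀ * P) (hne : Q₀ᵀ * P₀ ≠ 0) :
    ∃ M : Matrix (Fin n) (Fin n) ℝ, 0 < M.det ∧ M⁻¹ * P₀ = P ∧ Mᵀ * Q₀ = Q :=
  exists_posdet_matrix_solving_system_general hn P₀ Q₀ P Q heq hne
end

section
/- Let 𝕂 = ℝ or ℂ and let G be a semigroup of linear maps acting on 𝕂ⁿ. Then the diagonal action of G on (𝕂ⁿ)^(n+1) is not topologically transitive; in particular no tuple (X₁, ..., X_{n+1}) of vectors in 𝕂ⁿ has dense G-orbit in (𝕂ⁿ)^(n+1). -/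
theorem no_dense_orbit_on_succ_power {𝕂 : Type*} [RCLike 𝕂] {n : ℕ} (hn : 0 < n)
    (G : Subsemigroup ((Fin n → 𝕂) →ₗ[𝕂] (Fin n → 𝕂)))
    (X : Fin (n + 1) → (Fin n → 𝕂)) :
    ¬ Dense {Y : Fin (n + 1) → (Fin n → 𝕂) | ∃ f ∈ G, Y = fun i => f (X i)} := by
  -- X is linearly dependent since card (Fin (n+1)) > finrank
  have hnotli : ¬ LinearIndependent 𝕂 X := by
    intro h
    have := h.fintype_card_le_finrank
    simp [Module.finrank_pi] at this
  obtain ⟨g, hsum, i, hgi⟩ := Fintype.not_linearIndependent_iff.mp hnotli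
  set φ : (Fin (n + 1) → (Fin n → 𝕂)) → (Fin n → 𝕂) :=
    fun Y => ∑ j, g j • Y j with hφ
  have hφcont : Continuous φ := by
    apply continuous_finset_sum
    intro j _
    exact (continuous_apply j).const_smul (g j)
  intro hd
  -- the orbit is contained in φ ⁻¹' {0}
  have hsub : {Y : Fin (n + 1) → (Fin n → 𝕂) | ∃ f ∈ G, Y = fun i => f (X i)}
      ⊆ φ ⁻¹' {0} := by
    rintro Y ⟨f, -, rfl⟩
    simp only [Set.mem_preimage, Set.mem_singleton_iff, hφ]
    calc ∑ j, g j • f (X j) = f (∑ j, g j • X j) := by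
          rw [map_sum]; simp [map_smul]
      _ = 0 := by rw [hsum, map_zero]
  have hclosed : IsClosed (φ ⁻¹' ({0} : Set (Fin n → 𝕂))) :=
    isClosed_singleton.preimage hφcont
  have huniv : (φ ⁻¹' ({0} : Set (Fin n → 𝕂))) = Set.univ := by
    rw [← hclosed.closure_eq]
    exact (hd.mono hsub).closure_eq
  -- construct Y with φ Y ≠ 0
  obtain ⟨k⟩ : Nonempty (Fin n) := ⟨⟨0, hn⟩⟩
  set Y : Fin (n + 1) → (Fin n → 𝕂) :=
    fun j => if j = i then (g i)⁻¹ • (fun _ : Fin n => (1 : 𝕂)) else 0 with hY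
  have hφY : φ Y = fun _ => (1 : 𝕂) := by
    simp only [hφ, hY]
    rw [Finset.sum_eq_single i]
    · funext l; simp [smul_smul, hgi]
    · intro j _ hj; simp [hj]
    · simp
  have : Y ∈ φ ⁻¹' ({0} : Set (Fin n → 𝕂)) := huniv ▸ Set.mem_univ Y
  rw [Set.mem_preimage, Set.mem_singleton_iff, hφY] at this
  exact one_ne_zero (congrFun this k)
end

section
/- Let A be the 2×2 real matrix [[a, e],[1, 0]] and B = [[1,0],[0,b]] with a = -2^{3/5}, e = -2^{-4/5}, b = 8/3. Then A·B·A³·B·A equals the matrix [[4/9·d, 0],[0, d]] for some nonzero real scalar d, i.e. the product is a diagonal matrix whose ratio of diagonal entries is 4/9. -/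
theorem product_is_diagonal :
    let a : ℝ := -(2 : ℝ) ^ ((3 : ℝ) / 5)
    let e : ℝ := -(2 : ℝ) ^ (-(4 : ℝ) / 5)
    let b : ℝ := 8 / 3
    let A : Matrix (Fin 2) (Fin 2) ℝ := !![a, e; 1, 0]
    let B : Matrix (Fin 2) (Fin 2) ℝ := !![1, 0; 0, b]
    ∃ d : ℝ, d ≠ 0 ∧ A * B * A ^ 3 * B * A = !![4 / 9 * d, 0; 0, d] := by
  intro a e b A B
  refine ⟨1, one_ne_zero, ?_⟩
  obtain ⟨x, hx5, ha, he⟩ :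
      ∃ x : ℝ, x ^ 5 = 2 ∧ a = -x ^ 3 ∧ e = -(x / 2) := by
    refine ⟨(2 : ℝ) ^ ((1 : ℝ) / 5), ?_, ?_, ?_⟩
    · rw [← Real.rpow_natCast ((2:ℝ) ^ ((1:ℝ)/5)) 5, ← Real.rpow_mul (by norm_num)]
      norm_num
    · rw [show a = -(2:ℝ) ^ ((3:ℝ)/5) from rfl,
        ← Real.rpow_natCast ((2:ℝ) ^ ((1:ℝ)/5)) 3, ← Real.rpow_mul (by norm_num)]
      norm_num
    · rw [show e = -(2:ℝ) ^ (-(4:ℝ)/5) from rfl,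
        show (-(4:ℝ)/5) = (1:ℝ)/5 - 1 by norm_num,
        Real.rpow_sub (by norm_num), Real.rpow_one]
  have hA : A = !![a, e; 1, 0] := rfl
  have hB : B = !![1, 0; 0, b] := rfl
  have hb : b = 8 / 3 := rfl
  rw [pow_succ, pow_succ, pow_one, hA, hB, hb, ha, he]
  rw [Matrix.mul_fin_two, Matrix.mul_fin_two, Matrix.mul_fin_two,
    Matrix.mul_fin_two, Matrix.mul_fin_two, Matrix.mul_fin_two]
  ext i j
  fin_cases i <;> fin_cases j <;>
    simp only [Fin.mk_zero, Fin.mk_one, Matrix.cons_val', Matrix.cons_val_zero,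
      Matrix.cons_val_one, Matrix.head_cons, Matrix.empty_val',
      Matrix.cons_val_fin_one, Matrix.head_fin_const, Matrix.of_apply]
  · linear_combination (2/9 + 5/3 * x ^ 5 - x ^ 10) * hx5
  · linear_combination (1/6 * x ^ 3 - 1/2 * x ^ 8) * hx5
  · linear_combination (-1/3 * x ^ 2 + x ^ 7) * hx5
  · linear_combination (1/2 + 1/2 * x ^ 5) * hx5
end

section
/- Let b > 1 and 0 < c < 1 be real numbers with ln(b)/ln(c) irrational. Then the set {b^k · c^l : k, l ∈ ℕ, k, l ≥ 1} is dense in the positive reals. -/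
/-!
With `α = log b > 0 > γ = log c`, the logarithms of the numbers `b ^ k * c ^ l` form the additive
semigroup of all `k α + l γ` with `k, l ≥ 1`, and since `exp` is continuous it suffices that this
semigroup is dense in `ℝ`. As `α / γ` is irrational, the group `ℤ α + ℤ γ` is dense, so it contains
some `m α + n γ ∈ (0, ε)`. Once `ε < min α (-γ)`, the coefficients `m, n` have the same strict sign,
so `±(m α + n γ)` lies in the semigroup. Starting from an element of the semigroup far below (or far
above) a target point and adding multiples of this small element reaches the point up to `ε`.
-/

open Set Real

lemma AddSubsemigroup.add_nsmul_mem {M : Type*} [AddMonoid M] {S : AddSubsemigroup M} {a s : M}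
    (ha : a ∈ S) (hs : s ∈ S) (n : ℕ) : a + n • s ∈ S := by
  induction n with
  | zero => simpa using ha
  | succ n ih => simpa [succ_nsmul, ← add_assoc] using S.add_mem ih hs

lemma exists_nat_abs_add_nsmul_sub_lt {a s x : ℝ} (hs : s ≠ 0) (h : 0 ≤ (x - a) / s) :
    ∃ n : ℕ, |a + n • s - x| < |s| := by
  set q := (x - a) / s with hq
  refine ⟨⌊q⌋₊, ?_⟩
  have hfloor : (⌊q⌋₊ : ℝ) ≤ q := Nat.floor_le h
  have hfloor' : q < ⌊q⌋₊ + 1 := Nat.lt_floor_add_one q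
  have hx : a + ⌊q⌋₊ • s - x = -((q - ⌊q⌋₊) * s) := by
    rw [hq, nsmul_eq_mul]; field_simp; ring
  rw [hx, abs_neg, abs_mul, abs_of_nonneg (by linarith)]
  exact mul_lt_of_lt_one_left (abs_pos.2 hs) (by linarith)

theorem AddSubsemigroup.dense_of_exists_abs_lt {S : AddSubsemigroup ℝ}
    (hsmall : ∀ ε > 0, ∃ s ∈ S, s ≠ 0 ∧ |s| < ε)
    (hAbove : ¬BddAbove (S : Set ℝ)) (hBelow : ¬BddBelow (S : Set ℝ)) : Dense (S : Set ℝ) := by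
  refine Metric.dense_iff.2 fun x ε hε => ?_
  obtain ⟨s, hsS, hs0, hsε⟩ := hsmall ε hε
  obtain ⟨a, haS, hxa⟩ : ∃ a ∈ S, 0 ≤ (x - a) / s := by
    rcases hs0.lt_or_gt with hs | hs
    · obtain ⟨a, haS, ha⟩ := not_bddAbove_iff.1 hAbove x
      exact ⟨a, haS, div_nonneg_of_nonpos (by linarith) hs.le⟩
    · obtain ⟨a, haS, ha⟩ := not_bddBelow_iff.1 hBelow x
      exact ⟨a, haS, div_nonneg (by linarith) hs.le⟩
  obtain ⟨n, hn⟩ := exists_nat_abs_add_nsmul_sub_lt hs0 hxa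
  exact ⟨a + n • s, by rw [Metric.mem_ball, Real.dist_eq]; linarith, add_nsmul_mem haS hsS n⟩

def natCombinations (α γ : ℝ) : AddSubsemigroup ℝ where
  carrier := {x | ∃ k l : ℕ, 1 ≤ k ∧ 1 ≤ l ∧ x = k * α + l * γ}
  add_mem' := by
    rintro _ _ ⟨k, l, hk, hl, rfl⟩ ⟨k', l', hk', hl', rfl⟩
    exact ⟨k + k', l + l', by omega, by omega, by push_cast; ring⟩

lemma not_bddAbove_natCombinations {α : ℝ} (hα : 0 < α) (γ : ℝ) :
    ¬BddAbove (natCombinations α γ : Set ℝ) := by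
  refine not_bddAbove_iff.2 fun x => ?_
  obtain ⟨k, hk⟩ := exists_nat_gt ((x - γ) / α)
  refine ⟨(k + 1 : ℕ) * α + (1 : ℕ) * γ, ⟨k + 1, 1, by omega, le_rfl, rfl⟩, ?_⟩
  rw [div_lt_iff₀ hα] at hk
  push_cast
  linarith

lemma not_bddBelow_natCombinations (α : ℝ) {γ : ℝ} (hγ : γ < 0) :
    ¬BddBelow (natCombinations α γ : Set ℝ) := by
  refine not_bddBelow_iff.2 fun x => ?_
  obtain ⟨l, hl⟩ := exists_nat_gt ((x - α) / γ)
  refine ⟨(1 : ℕ) * α + (l + 1 : ℕ) * γ, ⟨1, l + 1, le_rfl, by omega, rfl⟩, ?_⟩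
  rw [div_lt_iff_of_neg hγ] at hl
  push_cast
  linarith

lemma exists_mem_natCombinations_abs_lt {α γ : ℝ} (hα : 0 < α) (hγ : γ < 0)
    (hirr : Irrational (α / γ)) {ε : ℝ} (hε : 0 < ε) :
    ∃ s ∈ natCombinations α γ, s ≠ 0 ∧ |s| < ε := by
  obtain ⟨g, hg, hg0, hgε⟩ := (dense_addSubgroupClosure_pair_iff.2 hirr).exists_between
    (lt_min hε (lt_min hα (neg_pos.2 hγ)))
  obtain ⟨m, n, rfl⟩ := AddSubgroup.mem_closure_pair.1 hg
  simp only [lt_min_iff, zsmul_eq_mul] at hg0 hgε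
  obtain ⟨hgε, hgα, hgγ⟩ := hgε
  have hsign : (0 < m ∧ 0 < n) ∨ (m < 0 ∧ n < 0) := by
    rcases lt_or_ge 0 m with hm | hm
    · have : (1 : ℝ) ≤ m := by exact_mod_cast hm
      have hn : (0 : ℝ) < n := by nlinarith
      exact .inl ⟨hm, by exact_mod_cast hn⟩
    · have : (m : ℝ) ≤ 0 := by exact_mod_cast hm
      have hn : n < 0 := by
        have : (n : ℝ) < 0 := by nlinarith
        exact_mod_cast this
      have : (n : ℝ) ≤ -1 := by exact_mod_cast (show n ≤ -1 by omega)
      have hm : (m : ℝ) < 0 := by nlinarith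
      exact .inr ⟨by exact_mod_cast hm, hn⟩
  rcases hsign with ⟨hm, hn⟩ | ⟨hm, hn⟩
  · lift m to ℕ using hm.le
    lift n to ℕ using hn.le
    push_cast at hg0 hgε ⊢
    exact ⟨_, ⟨m, n, by omega, by omega, rfl⟩, hg0.ne', by rwa [abs_of_pos hg0]⟩
  · obtain ⟨m, rfl⟩ := Int.exists_eq_neg_ofNat hm.le
    obtain ⟨n, rfl⟩ := Int.exists_eq_neg_ofNat hn.le
    push_cast at hg0 hgε hm hn
    refine ⟨m * α + n * γ, ⟨m, n, by omega, by omega, rfl⟩, by linarith, ?_⟩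
    rw [abs_of_neg (by linarith)]
    linarith

theorem dense_powers_in_pos_reals (b c : ℝ) (hb : 1 < b) (hc0 : 0 < c) (hc1 : c < 1)
    (hirr : Irrational (Real.log b / Real.log c)) :
    Set.Ioi (0 : ℝ) ⊆ closure {x : ℝ | ∃ k l : ℕ, 1 ≤ k ∧ 1 ≤ l ∧ x = b ^ k * c ^ l} := by
  have hlogb : 0 < log b := log_pos hb
  have hlogc : log c < 0 := log_neg hc0 hc1
  have hdense : Dense (natCombinations (log b) (log c) : Set ℝ) :=
    AddSubsemigroup.dense_of_exists_abs_lt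
      (fun _ hε => exists_mem_natCombinations_abs_lt hlogb hlogc hirr hε)
      (not_bddAbove_natCombinations hlogb _) (not_bddBelow_natCombinations _ hlogc)
  have himage : exp '' natCombinations (log b) (log c) ⊆
      {x : ℝ | ∃ k l : ℕ, 1 ≤ k ∧ 1 ≤ l ∧ x = b ^ k * c ^ l} := by
    rintro _ ⟨_, ⟨k, l, hk, hl, rfl⟩, rfl⟩
    exact ⟨k, l, hk, hl, by rw [exp_add, exp_nat_mul, exp_nat_mul, exp_log (by linarith),
      exp_log hc0]⟩
  intro x hx
  rw [← exp_log (mem_Ioi.1 hx)]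
  exact closure_mono himage <| image_closure_subset_closure_image continuous_exp
    ⟨log x, hdense.closure_eq ▸ mem_univ _, rfl⟩
end

section
/- Let G₁ = [[I, (a/r)V],[rVᵀ, ε]] and G₂ = [[I, sV],[(b/s)Vᵀ, δ]] be (n+1)×(n+1) matrices, where V is the first standard basis column vector of 𝕂ⁿ, r, s ∈ 𝕂 nonzero, a, b, ε, δ ∈ 𝕂, and z = rs with z ∉ {0, -ab, -aδ, -bε}. Then the product G₁G₂ = [[F, X],[Yᵀ, η]] has invertible upper-left n×n block F, and satisfies YᵀF⁻¹X = (z + aδ)(z + bε)/(z + ab) and η = z + εδ. -/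
/-!
With `P = V Vᵀ` idempotent (because `Vᵀ V = 1`), the product `G₁ G₂` has blocks
`F = 1 + (ab/z) P`, `X = ((z + aδ)/r) V`, `Yᵀ = ((z + bε)/s) Vᵀ` and `η = z + εδ`.
Since `F V = (1 + ab/z) V`, the inverse of `F` acts on `V` as division by `1 + ab/z = (z + ab)/z`,
which yields `Yᵀ F⁻¹ X = (z + aδ)(z + bε)/(z + ab)`.
-/

open Matrix

lemma Matrix.transpose_mul_self_ite_eq_zero {R : Type*} [Semiring R] {n : ℕ} (hn : 0 < n) :
    (of fun (i : Fin n) (_ : Fin 1) => if (i : ℕ) = 0 then (1 : R) else 0)ᵀ *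
      (of fun (i : Fin n) (_ : Fin 1) => if (i : ℕ) = 0 then (1 : R) else 0) = 1 := by
  ext i j
  rw [mul_apply, Finset.sum_eq_single (⟨0, hn⟩ : Fin n)]
  · simp [one_apply, Subsingleton.elim i j]
  · intro k _ hk
    have hk0 : (k : ℕ) ≠ 0 := fun h => hk (Fin.ext h)
    simp [hk0]
  · simp

namespace Matrix

variable {K : Type*} [Field K] {m k : Type*} [Fintype m] [DecidableEq m] [Fintype k]
  [DecidableEq k] {V : Matrix m k K} {W : Matrix k m K}

lemma one_add_smul_mul_mul_one_add_smul_mul (hWV : W * V = 1) (c d : K) :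
    (1 + c • (V * W)) * (1 + d • (V * W)) = 1 + (c + d + c * d) • (V * W) := by
  have hidem : V * W * (V * W) = V * W := by
    rw [Matrix.mul_assoc, ← Matrix.mul_assoc W, hWV, Matrix.one_mul]
  simp only [Matrix.add_mul, Matrix.mul_add, Matrix.one_mul, Matrix.mul_one, Matrix.smul_mul,
    Matrix.mul_smul, hidem]
  module

lemma one_add_smul_mul_mul_inverse (hWV : W * V = 1) {c : K} (hc : 1 + c ≠ 0) :
    (1 + c • (V * W)) * (1 + (-c / (1 + c)) • (V * W)) = 1 := by
  have hcoeff : c + -c / (1 + c) + c * (-c / (1 + c)) = 0 := by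
    field_simp
    ring
  rw [one_add_smul_mul_mul_one_add_smul_mul hWV, hcoeff, zero_smul, add_zero]

lemma isUnit_one_add_smul_mul (hWV : W * V = 1) {c : K} (hc : 1 + c ≠ 0) :
    IsUnit (1 + c • (V * W)) :=
  (isUnit_iff_isUnit_det _).mpr (isUnit_det_of_right_inverse (one_add_smul_mul_mul_inverse hWV hc))

lemma smul_mul_inv_one_add_smul_mul_mul_smul (hWV : W * V = 1) {c : K} (hc : 1 + c ≠ 0)
    (x y : K) : (y • W) * (1 + c • (V * W))⁻¹ * (x • V) = (x * y / (1 + c)) • 1 := by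
  rw [inv_eq_right_inv (one_add_smul_mul_mul_inverse hWV hc)]
  have hmid : W * (1 + (-c / (1 + c)) • (V * W)) * V = (1 / (1 + c)) • 1 := by
    rw [Matrix.mul_add, Matrix.mul_one, Matrix.mul_smul, ← Matrix.mul_assoc, hWV, Matrix.one_mul,
      Matrix.add_mul, Matrix.smul_mul, hWV, show 1 / (1 + c) = 1 + -c / (1 + c) by field_simp; ring, add_smul, one_smul]
  rw [Matrix.smul_mul, Matrix.mul_smul, Matrix.smul_mul, hmid, smul_smul, smul_smul]
  congr 1
  ring

lemma fromBlocks_smul_mul_fromBlocks_smul (hWV : W * V = 1) (p q ε s t δ : K) :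
    fromBlocks 1 (p • V) (q • W) (ε • 1) * fromBlocks 1 (s • V) (t • W) (δ • 1) =
      fromBlocks (1 + (p * t) • (V * W)) ((s + p * δ) • V) ((q + ε * t) • W)
        ((q * s + ε * δ) • (1 : Matrix k k K)) := by
  simp only [fromBlocks_multiply, Matrix.one_mul, Matrix.mul_one, Matrix.smul_mul,
    Matrix.mul_smul, smul_smul, hWV]
  congr 1 <;> module

end Matrix

open Matrix in
theorem upsilon_of_product_general {𝕂 : Type*} [RCLike 𝕂] {n : ℕ} (hn : 0 < n)
    (a b ε δ r s : 𝕂) (hr : r ≠ 0) (hs : s ≠ 0)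
    (z : 𝕂) (hz : z = r * s)
    (hzab : z ≠ -(a * b)) :
    let V : Matrix (Fin n) (Fin 1) 𝕂 := Matrix.of fun i _ => if (i : ℕ) = 0 then 1 else 0
    let G₁ : Matrix (Fin n ⊕ Fin 1) (Fin n ⊕ Fin 1) 𝕂 :=
      fromBlocks 1 ((a / r) • V) (r • Vᵀ) (ε • 1)
    let G₂ : Matrix (Fin n ⊕ Fin 1) (Fin n ⊕ Fin 1) 𝕂 :=
      fromBlocks 1 (s • V) ((b / s) • Vᵀ) (δ • 1)
    IsUnit (G₁ * G₂).toBlocks₁₁ ∧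
      (G₁ * G₂).toBlocks₂₁ * ((G₁ * G₂).toBlocks₁₁)⁻¹ * (G₁ * G₂).toBlocks₁₂ =
        ((z + a * δ) * (z + b * ε) / (z + a * b)) • 1 ∧
      (G₁ * G₂).toBlocks₂₂ = (z + ε * δ) • 1 := by
  intro V G₁ G₂
  subst hz
  have hVV : Vᵀ * V = 1 := transpose_mul_self_ite_eq_zero hn
  have hc : 1 + a / r * (b / s) ≠ 0 := by
    have hrsab : r * s + a * b ≠ 0 := fun h => hzab (by linear_combination h)
    field_simp
    exact div_ne_zero hrsab (mul_ne_zero hr hs)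
  simp only [G₁, G₂]
  rw [fromBlocks_smul_mul_fromBlocks_smul hVV, toBlocks_fromBlocks₁₁,
    toBlocks_fromBlocks₁₂, toBlocks_fromBlocks₂₁, toBlocks_fromBlocks₂₂,
    smul_mul_inv_one_add_smul_mul_mul_smul hVV hc]
  refine ⟨isUnit_one_add_smul_mul hVV hc, ?_, rfl⟩
  congr 1
  field_simp

open Matrix in
theorem upsilon_of_product {𝕂 : Type*} [RCLike 𝕂] {n : ℕ} (hn : 0 < n)
    (a b ε δ r s : 𝕂) (hr : r ≠ 0) (hs : s ≠ 0)
    (z : 𝕂) (hz : z = r * s)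
    (hz0 : z ≠ 0) (hzab : z ≠ -(a * b)) (hzad : z ≠ -(a * δ)) (hzbe : z ≠ -(b * ε)) :
    let V : Matrix (Fin n) (Fin 1) 𝕂 := Matrix.of fun i _ => if (i : ℕ) = 0 then 1 else 0
    let G₁ : Matrix (Fin n ⊕ Fin 1) (Fin n ⊕ Fin 1) 𝕂 :=
      fromBlocks 1 ((a / r) • V) (r • Vᵀ) (ε • 1)
    let G₂ : Matrix (Fin n ⊕ Fin 1) (Fin n ⊕ Fin 1) 𝕂 :=
      fromBlocks 1 (s • V) ((b / s) • Vᵀ) (δ • 1)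
    IsUnit (G₁ * G₂).toBlocks₁₁ ∧
      (G₁ * G₂).toBlocks₂₁ * ((G₁ * G₂).toBlocks₁₁)⁻¹ * (G₁ * G₂).toBlocks₁₂ =
        ((z + a * δ) * (z + b * ε) / (z + a * b)) • 1 ∧
      (G₁ * G₂).toBlocks₂₂ = (z + ε * δ) • 1 :=
  upsilon_of_product_general hn a b ε δ r s hr hs z hz hzab
end
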